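/- Let Γ₂[2] be the set of matrices M in the integral symplectic group Sp(4,ℤ) (4×4 integer matrices M with MᵀJM = J, where J = [[0,−I₂],[I₂,0]]) that are congruent to the identity matrix modulo 2. Write M in 2×2 blocks as M = [[A,B],[C,D]] and set C·Dᵀ = [[α,β],[β,γ]]. Then α, β, γ are even integers, and the map χ : Γ₂[2] → {±1} defined by χ(M) = (−1)^((α+β+γ)/2) is a group homomorphism. Moreover χ is surjective, so its kernel is a subgroup of index two of Γ₂[2]. -/

import Mathlib

open Matrix
/-- The standard symplectic form matrix `J = [[0, −I₂],[I₂, 0]]`. -/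
def Jmat : Matrix (Fin 4) (Fin 4) ℤ :=
  !![0, 0, -1, 0; 0, 0, 0, -1; 1, 0, 0, 0; 0, 1, 0, 0]

/-- `M ∈ Sp(4,ℤ)`: an integral matrix with `Mᵀ J M = J`. -/
def IsSp4Z (M : Matrix (Fin 4) (Fin 4) ℤ) : Prop :=
  Mᵀ * Jmat * M = Jmat

/-- `M ∈ Γ₂[2]`: symplectic and congruent to the identity modulo 2. -/
def InGamma2Two (M : Matrix (Fin 4) (Fin 4) ℤ) : Prop :=
  IsSp4Z M ∧ ∀ i j, (2 : ℤ) ∣ (M i j - (1 : Matrix (Fin 4) (Fin 4) ℤ) i j)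

/-- The lower-left block `C` of `M = [[A,B],[C,D]]`. -/
def blockC (M : Matrix (Fin 4) (Fin 4) ℤ) : Matrix (Fin 2) (Fin 2) ℤ :=
  Matrix.of fun i j => M ⟨i.1 + 2, by omega⟩ ⟨j.1, by omega⟩

/-- The lower-right block `D` of `M = [[A,B],[C,D]]`. -/
def blockD (M : Matrix (Fin 4) (Fin 4) ℤ) : Matrix (Fin 2) (Fin 2) ℤ :=
  Matrix.of fun i j => M ⟨i.1 + 2, by omega⟩ ⟨j.1 + 2, by omega⟩

/-- `α`, the (0,0) entry of `C·Dᵀ`. -/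
def alphaOf (M : Matrix (Fin 4) (Fin 4) ℤ) : ℤ := (blockC M * (blockD M)ᵀ) 0 0

/-- `β`, the (0,1) entry of `C·Dᵀ`. -/
def betaOf (M : Matrix (Fin 4) (Fin 4) ℤ) : ℤ := (blockC M * (blockD M)ᵀ) 0 1

/-- `γ`, the (1,1) entry of `C·Dᵀ`. -/
def gammaOf (M : Matrix (Fin 4) (Fin 4) ℤ) : ℤ := (blockC M * (blockD M)ᵀ) 1 1

/-- The character `χ(M) = (−1)^((α+β+γ)/2) ∈ {±1}`. -/
def chiOf (M : Matrix (Fin 4) (Fin 4) ℤ) : ℤˣ :=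
  (-1 : ℤˣ) ^ ((alphaOf M + betaOf M + gammaOf M) / 2)

/-!
Write `M ∈ Γ₂[2]` as `M = 1 + 2X`. Then `α ≡ 2X₂₀`, `β ≡ 2X₂₁`, `γ ≡ 2X₃₁ (mod 4)`, so
`χ(M) = (-1)^(X₂₀ + X₂₁ + X₃₁)`. Since `(1 + 2X)(1 + 2Y) = 1 + 2(X + Y + 2XY)`, the matrix `X`
is additive modulo 2 under multiplication, and `χ` is a homomorphism. The transvection
`1 + 2E₂₀` has `X₂₀ = 1`, so `χ` takes the value `-1`.
-/

theorem Int.units_zpow_add_two_mul (u : ℤˣ) (a b : ℤ) : u ^ (a + 2 * b) = u ^ a := by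
  rw [_root_.zpow_add, _root_.zpow_mul, zpow_two, Int.units_mul_self, _root_.one_zpow, mul_one]

theorem Matrix.exists_eq_one_add_two_smul {n : Type*} [DecidableEq n] {M : Matrix n n ℤ}
    (h : ∀ i j, (2 : ℤ) ∣ M i j - (1 : Matrix n n ℤ) i j) :
    ∃ X : Matrix n n ℤ, M = 1 + (2 : ℤ) • X := by
  choose X hX using h
  exact ⟨Matrix.of X, by ext i j; simp [← hX]⟩

theorem one_add_two_smul_mul_one_add_two_smul {R : Type*} [Ring R] (x y : R) :
    (1 + (2 : ℤ) • x) * (1 + (2 : ℤ) • y) = 1 + (2 : ℤ) • (x + y + (2 : ℤ) • (x * y)) := by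
  noncomm_ring

section Entries

variable (M : Matrix (Fin 4) (Fin 4) ℤ)

theorem alphaOf_eq : alphaOf M = M 2 0 * M 2 2 + M 2 1 * M 2 3 := by
  simp [alphaOf, blockC, blockD, Matrix.mul_apply, Fin.sum_univ_two]

theorem betaOf_eq : betaOf M = M 2 0 * M 3 2 + M 2 1 * M 3 3 := by
  simp [betaOf, blockC, blockD, Matrix.mul_apply, Fin.sum_univ_two]

theorem gammaOf_eq : gammaOf M = M 3 0 * M 3 2 + M 3 1 * M 3 3 := by
  simp [gammaOf, blockC, blockD, Matrix.mul_apply, Fin.sum_univ_two]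

end Entries

section OneAddTwoSmul

variable (X : Matrix (Fin 4) (Fin 4) ℤ)

theorem alphaOf_one_add_two_smul :
    alphaOf (1 + (2 : ℤ) • X) = 2 * (X 2 0 + 2 * (X 2 0 * X 2 2 + X 2 1 * X 2 3)) := by
  rw [alphaOf_eq]
  simp only [Matrix.add_apply, Matrix.smul_apply, smul_eq_mul, one_apply, Fin.reduceEq, ↓reduceIte]
  ring

theorem betaOf_one_add_two_smul :
    betaOf (1 + (2 : ℤ) • X) = 2 * (X 2 1 + 2 * (X 2 0 * X 3 2 + X 2 1 * X 3 3)) := by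
  rw [betaOf_eq]
  simp only [Matrix.add_apply, Matrix.smul_apply, smul_eq_mul, one_apply, Fin.reduceEq, ↓reduceIte]
  ring

theorem gammaOf_one_add_two_smul :
    gammaOf (1 + (2 : ℤ) • X) = 2 * (X 3 1 + 2 * (X 3 0 * X 3 2 + X 3 1 * X 3 3)) := by
  rw [gammaOf_eq]
  simp only [Matrix.add_apply, Matrix.smul_apply, smul_eq_mul, one_apply, Fin.reduceEq, ↓reduceIte]
  ring

theorem chiOf_one_add_two_smul : chiOf (1 + (2 : ℤ) • X) = (-1) ^ (X 2 0 + X 2 1 + X 3 1) := by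
  rw [chiOf, alphaOf_one_add_two_smul, betaOf_one_add_two_smul, gammaOf_one_add_two_smul,
    ← mul_add, ← mul_add, Int.mul_ediv_cancel_left _ two_ne_zero]
  convert Int.units_zpow_add_two_mul (-1) (X 2 0 + X 2 1 + X 3 1)
    (X 2 0 * X 2 2 + X 2 1 * X 2 3 + (X 2 0 * X 3 2 + X 2 1 * X 3 3) +
      (X 3 0 * X 3 2 + X 3 1 * X 3 3)) using 2
  ring

end OneAddTwoSmul

theorem chiOf_one_add_two_smul_mul (X Y : Matrix (Fin 4) (Fin 4) ℤ) :
    chiOf ((1 + (2 : ℤ) • X) * (1 + (2 : ℤ) • Y)) =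
      chiOf (1 + (2 : ℤ) • X) * chiOf (1 + (2 : ℤ) • Y) := by
  rw [one_add_two_smul_mul_one_add_two_smul, chiOf_one_add_two_smul, chiOf_one_add_two_smul,
    chiOf_one_add_two_smul, ← _root_.zpow_add]
  simp only [Matrix.add_apply, Matrix.smul_apply, smul_eq_mul]
  convert Int.units_zpow_add_two_mul (-1) _ ((X * Y) 2 0 + (X * Y) 2 1 + (X * Y) 3 1) using 2
  ring

/-- For `M ∈ Γ₂[2]` the entries `α, β, γ` of `C·Dᵀ` are even; the map
`χ(M) = (−1)^((α+β+γ)/2)` is multiplicative on `Γ₂[2]` and takes both values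
`1` and `−1`, so its kernel is a subgroup of index two of `Γ₂[2]`. -/
theorem stmt_3 :
    (∀ M, InGamma2Two M → (2 ∣ alphaOf M ∧ 2 ∣ betaOf M ∧ 2 ∣ gammaOf M)) ∧
    (∀ M N, InGamma2Two M → InGamma2Two N → chiOf (M * N) = chiOf M * chiOf N) ∧
    (∃ M, InGamma2Two M ∧ chiOf M = 1) ∧ (∃ M, InGamma2Two M ∧ chiOf M = -1) := by
  refine ⟨fun M hM => ?_, fun M N hM hN => ?_, ?_, ?_⟩
  · obtain ⟨X, rfl⟩ := Matrix.exists_eq_one_add_two_smul hM.2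
    rw [alphaOf_one_add_two_smul, betaOf_one_add_two_smul, gammaOf_one_add_two_smul]
    exact ⟨dvd_mul_right _ _, dvd_mul_right _ _, dvd_mul_right _ _⟩
  · obtain ⟨X, rfl⟩ := Matrix.exists_eq_one_add_two_smul hM.2
    obtain ⟨Y, rfl⟩ := Matrix.exists_eq_one_add_two_smul hN.2
    exact chiOf_one_add_two_smul_mul X Y
  · exact ⟨1, ⟨by unfold IsSp4Z; decide, by decide⟩, by decide⟩
  · exact ⟨!![1, 0, 0, 0; 0, 1, 0, 0; 2, 0, 1, 0; 0, 0, 0, 1],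
      ⟨by unfold IsSp4Z; decide, by decide⟩, by decide⟩
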